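/- arXiv:2604.17804 — 6 statements merged into one kernel-verified Lean document; each statement's English description precedes it below -/
import Mathlib

section
/- Let φ : I → ℝ be continuous on a compact interval I, and let a_I be its L∞ best affine estimator with gradient γ(I). Define β_φ(I) := ‖φ − a_I‖_{L∞(I)} / ℓ(φ(I)), where ℓ denotes length (here φ is assumed strictly monotone so φ(I) is an interval). Then (1 − 2β_φ(I)) · ℓ(φ(I))/ℓ(I) ≤ γ(I) ≤ (1 + 2β_φ(I)) · ℓ(φ(I))/ℓ(I). -/
/-- The L∞ error of the affine function `x ↦ γ x + δ` as an approximation of `φ` on `[a,b]`. -/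
noncomputable def supErr (φ : ℝ → ℝ) (a b γ δ : ℝ) : ℝ :=
  sSup ((fun x => |φ x - (γ * x + δ)|) '' Set.Icc a b)

/-- If `x ↦ γ x + δ` is the L∞ best affine estimator of a continuous strictly increasing
`φ` on `[a,b]`, and `β := ‖φ - a‖_{L∞}/ℓ(φ(I))`, then
`(1 - 2β) ℓ(φ(I))/ℓ(I) ≤ γ ≤ (1 + 2β) ℓ(φ(I))/ℓ(I)`. -/
theorem stmt1 (a b γ δ : ℝ) (hab : a < b) (φ : ℝ → ℝ)
    (hφc : ContinuousOn φ (Set.Icc a b))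
    (hφm : StrictMonoOn φ (Set.Icc a b))
    (hbest : ∀ γ' δ' : ℝ, supErr φ a b γ δ ≤ supErr φ a b γ' δ') :
    (1 - 2 * (supErr φ a b γ δ / (φ b - φ a))) * ((φ b - φ a) / (b - a)) ≤ γ ∧
      γ ≤ (1 + 2 * (supErr φ a b γ δ / (φ b - φ a))) * ((φ b - φ a) / (b - a)) := by
  have hD : 0 < φ b - φ a :=
    sub_pos.2 (hφm (Set.left_mem_Icc.2 hab.le) (Set.right_mem_Icc.2 hab.le) hab)
  have hL : 0 < b - a := sub_pos.2 hab
  set E := supErr φ a b γ δ with hE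
  have hcont : ContinuousOn (fun x => |φ x - (γ * x + δ)|) (Set.Icc a b) :=
    (hφc.sub (Continuous.continuousOn (by continuity))).abs
  have hbdd : BddAbove ((fun x => |φ x - (γ * x + δ)|) '' Set.Icc a b) :=
    (isCompact_Icc.image_of_continuousOn hcont).bddAbove
  have hEa : |φ a - (γ * a + δ)| ≤ E := le_csSup hbdd ⟨a, Set.left_mem_Icc.2 hab.le, rfl⟩
  have hEb : |φ b - (γ * b + δ)| ≤ E := le_csSup hbdd ⟨b, Set.right_mem_Icc.2 hab.le, rfl⟩
  have h1 : φ b - φ a - 2 * E ≤ γ * (b - a) := by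
    nlinarith [abs_le.1 hEa, (abs_le.1 hEa).1, (abs_le.1 hEa).2,
      (abs_le.1 hEb).1, (abs_le.1 hEb).2]
  have h2 : γ * (b - a) ≤ φ b - φ a + 2 * E := by
    nlinarith [(abs_le.1 hEa).1, (abs_le.1 hEa).2, (abs_le.1 hEb).1, (abs_le.1 hEb).2]
  constructor
  · have heq : (1 - 2 * (E / (φ b - φ a))) * ((φ b - φ a) / (b - a))
        = (φ b - φ a - 2 * E) / (b - a) := by
      field_simp
    rw [heq, div_le_iff₀ hL]
    linarith
  · have heq : (1 + 2 * (E / (φ b - φ a))) * ((φ b - φ a) / (b - a))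
        = (φ b - φ a + 2 * E) / (b - a) := by
      field_simp
    rw [heq, le_div_iff₀ hL]
    linarith
end

section
/- Fix λ > 1 and let I ⊆ I′ be compact intervals with ℓ(I′) ≤ λ·ℓ(I). If β_φ(I′) ≤ 1/4, then |γ(I)/γ(I′) − 1| ≤ 8λ·β_φ(I′), where γ(·) denotes the slope of the L∞ best affine estimator of φ on the respective interval. -/
section supErr

variable {φ : ℝ → ℝ} {a b c d γ δ : ℝ}

lemma bddAbove_abs_sub_affine_image (hφ : ContinuousOn φ (Set.Icc a b)) :
    BddAbove ((fun x => |φ x - (γ * x + δ)|) '' Set.Icc a b) :=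
  (isCompact_Icc.image_of_continuousOn (hφ.sub (by fun_prop)).abs).bddAbove

lemma abs_sub_affine_le_supErr (hφ : ContinuousOn φ (Set.Icc a b)) {x : ℝ}
    (hx : x ∈ Set.Icc a b) : |φ x - (γ * x + δ)| ≤ supErr φ a b γ δ :=
  le_csSup (bddAbove_abs_sub_affine_image hφ) ⟨x, hx, rfl⟩

lemma supErr_mono (hφ : ContinuousOn φ (Set.Icc a b)) (hcd : c ≤ d)
    (hsub : Set.Icc c d ⊆ Set.Icc a b) : supErr φ c d γ δ ≤ supErr φ a b γ δ :=
  csSup_le_csSup (bddAbove_abs_sub_affine_image hφ) ((Set.nonempty_Icc.mpr hcd).image _)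
    (Set.image_mono hsub)

end supErr

lemma abs_sub_mul_abs_sub_le_of_abs_sub_affine_le {φ : ℝ → ℝ} {c d γ₁ δ₁ γ₂ δ₂ ε₁ ε₂ : ℝ}
    (h₁c : |φ c - (γ₁ * c + δ₁)| ≤ ε₁) (h₁d : |φ d - (γ₁ * d + δ₁)| ≤ ε₁)
    (h₂c : |φ c - (γ₂ * c + δ₂)| ≤ ε₂) (h₂d : |φ d - (γ₂ * d + δ₂)| ≤ ε₂) :
    |γ₁ - γ₂| * |d - c| ≤ 2 * (ε₁ + ε₂) := by
  rw [← abs_mul, abs_le]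
  obtain ⟨h₁c', h₁c''⟩ := abs_le.mp h₁c
  obtain ⟨h₁d', h₁d''⟩ := abs_le.mp h₁d
  obtain ⟨h₂c', h₂c''⟩ := abs_le.mp h₂c
  obtain ⟨h₂d', h₂d''⟩ := abs_le.mp h₂d
  constructor <;> linarith

lemma abs_sub_mul_le_four_mul_supErr_of_supErr_le {φ : ℝ → ℝ} {a b c d γ δ γ' δ' : ℝ}
    (hφ : ContinuousOn φ (Set.Icc a b)) (hcd : c ≤ d) (hsub : Set.Icc c d ⊆ Set.Icc a b)
    (hbest : supErr φ c d γ δ ≤ supErr φ c d γ' δ') :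
    |γ - γ'| * (d - c) ≤ 4 * supErr φ a b γ' δ' := by
  have hφ' : ContinuousOn φ (Set.Icc c d) := hφ.mono hsub
  have hc : c ∈ Set.Icc c d := Set.left_mem_Icc.mpr hcd
  have hd : d ∈ Set.Icc c d := Set.right_mem_Icc.mpr hcd
  have hbest' : supErr φ c d γ δ ≤ supErr φ a b γ' δ' :=
    hbest.trans (supErr_mono hφ hcd hsub)
  have key : |γ - γ'| * |d - c| ≤ 2 * (supErr φ a b γ' δ' + supErr φ a b γ' δ') :=
    abs_sub_mul_abs_sub_le_of_abs_sub_affine_le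
    ((abs_sub_affine_le_supErr hφ' hc).trans hbest') ((abs_sub_affine_le_supErr hφ' hd).trans hbest')
    (abs_sub_affine_le_supErr hφ (hsub hc)) (abs_sub_affine_le_supErr hφ (hsub hd))
  rw [abs_of_nonneg (sub_nonneg.mpr hcd)] at key
  linarith

lemma sub_le_two_mul_mul_sub_of_supErr_le {φ : ℝ → ℝ} {a b γ δ : ℝ}
    (hφ : ContinuousOn φ (Set.Icc a b)) (hab : a ≤ b)
    (hε : supErr φ a b γ δ ≤ (φ b - φ a) / 4) :
    φ b - φ a ≤ 2 * γ * (b - a) := by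
  have ha := abs_le.mp ((abs_sub_affine_le_supErr (γ := γ) (δ := δ) hφ
    (Set.left_mem_Icc.mpr hab)).trans hε)
  have hb := abs_le.mp ((abs_sub_affine_le_supErr (γ := γ) (δ := δ) hφ
    (Set.right_mem_Icc.mpr hab)).trans hε)
  linarith [ha.2, hb.1]

theorem stmt3_general (φ : ℝ → ℝ) (a b c d lam : ℝ)
    (hab : a < b) (hcd : c < d)
    (hsub : Set.Icc c d ⊆ Set.Icc a b)
    (hlen : b - a ≤ lam * (d - c))
    (hφc : ContinuousOn φ (Set.Icc a b))
    (hφm : StrictMonoOn φ (Set.Icc a b))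
    (γI δI γI' δI' : ℝ)
    (hbestI : ∀ γ' δ' : ℝ, supErr φ c d γI δI ≤ supErr φ c d γ' δ')
    (hpos : 0 < γI')
    (hβ : supErr φ a b γI' δI' / (φ b - φ a) ≤ 1 / 4) :
    |γI / γI' - 1| ≤ 8 * lam * (supErr φ a b γI' δI' / (φ b - φ a)) := by
  set ε := supErr φ a b γI' δI'
  have hL : 0 < φ b - φ a :=
    sub_pos.mpr (hφm (Set.left_mem_Icc.mpr hab.le) (Set.right_mem_Icc.mpr hab.le) hab)
  have hlam_pos : 0 < lam := pos_of_mul_pos_left ((sub_pos.mpr hab).trans_le hlen) (sub_pos.mpr hcd).le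
  have hslope : |γI - γI'| * (d - c) ≤ 4 * ε :=
    abs_sub_mul_le_four_mul_supErr_of_supErr_le hφc hcd.le hsub (hbestI γI' δI')
  have hε : ε ≤ (φ b - φ a) / 4 := by
    rwa [div_le_iff₀ hL, div_mul_eq_mul_div, one_mul] at hβ
  have hrange : φ b - φ a ≤ 2 * lam * γI' * (d - c) :=
    calc φ b - φ a ≤ 2 * γI' * (b - a) := sub_le_two_mul_mul_sub_of_supErr_le hφc hab.le hε
      _ ≤ 2 * γI' * (lam * (d - c)) := by gcongr
      _ = 2 * lam * γI' * (d - c) := by ring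
  rw [show γI / γI' - 1 = (γI - γI') / γI' by field_simp, abs_div, abs_of_pos hpos,
    div_le_iff₀ hpos, mul_div_assoc', div_mul_eq_mul_div, le_div_iff₀ hL]
  calc |γI - γI'| * (φ b - φ a) ≤ |γI - γI'| * (2 * lam * γI' * (d - c)) := by gcongr
    _ = 2 * lam * γI' * (|γI - γI'| * (d - c)) := by ring
    _ ≤ 2 * lam * γI' * (4 * ε) := by gcongr
    _ = 8 * lam * ε * γI' := by ring

/-- Lemma 3.1.8: if `I = [c,d] ⊆ I' = [a,b]` with `ℓ(I') ≤ λ ℓ(I)` and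
`β_φ(I') ≤ 1/4`, then `|γ(I)/γ(I') - 1| ≤ 8 λ β_φ(I')`, where `γ(J)` denotes
the slope of the L∞ best affine estimator of `φ` over `J`. -/
theorem stmt3 (φ : ℝ → ℝ) (a b c d lam : ℝ) (hlam : 1 < lam)
    (hab : a < b) (hcd : c < d)
    (hsub : Set.Icc c d ⊆ Set.Icc a b)
    (hlen : b - a ≤ lam * (d - c))
    (hφc : ContinuousOn φ (Set.Icc a b))
    (hφm : StrictMonoOn φ (Set.Icc a b))
    (γI δI γI' δI' : ℝ)
    (hbestI : ∀ γ' δ' : ℝ, supErr φ c d γI δI ≤ supErr φ c d γ' δ')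
    (hbestI' : ∀ γ' δ' : ℝ, supErr φ a b γI' δI' ≤ supErr φ a b γ' δ')
    (hpos : 0 < γI')
    (hβ : supErr φ a b γI' δI' / (φ b - φ a) ≤ 1 / 4) :
    |γI / γI' - 1| ≤ 8 * lam * (supErr φ a b γI' δI' / (φ b - φ a)) :=
  stmt3_general φ a b c d lam hab hcd hsub hlen hφc hφm γI δI γI' δI' hbestI hpos hβ
end

section
/- Fix λ > 1 and let I ⊆ I′ be compact intervals with ℓ(I′) ≤ λ·ℓ(I). If β_φ(I′) ≤ 1/(16λ), then ℓ(φ(I′)) ≤ 4λ·ℓ(φ(I)). -/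
/-- The optimal L∞ affine approximation error of `φ` on `[a,b]`. -/
noncomputable def infErr (φ : ℝ → ℝ) (a b : ℝ) : ℝ :=
  sInf {E : ℝ | ∃ γ δ : ℝ, E = supErr φ a b γ δ}

lemma supErr_spec (φ : ℝ → ℝ) (a b γ δ : ℝ)
    (hφc : ContinuousOn φ (Set.Icc a b)) {x : ℝ} (hx : x ∈ Set.Icc a b) :
    |φ x - (γ * x + δ)| ≤ supErr φ a b γ δ := by
  apply le_csSup
  · apply IsCompact.bddAbove
    apply IsCompact.image_of_continuousOn isCompact_Icc
    exact (hφc.sub (Continuous.continuousOn (by continuity))).abs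
  · exact ⟨x, hx, rfl⟩

/-- Lemma 3.1.10: if `I = [c,d] ⊆ I' = [a,b]` with `ℓ(I') ≤ λ ℓ(I)` and
`β_φ(I') ≤ 1/(16λ)`, then `ℓ(φ(I')) ≤ 4 λ ℓ(φ(I))`. -/
theorem stmt4 (φ : ℝ → ℝ) (a b c d lam : ℝ) (hlam : 1 < lam)
    (hab : a < b) (hcd : c < d)
    (hsub : Set.Icc c d ⊆ Set.Icc a b)
    (hlen : b - a ≤ lam * (d - c))
    (hφc : ContinuousOn φ (Set.Icc a b))
    (hφm : StrictMonoOn φ (Set.Icc a b))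
    (hβ : infErr φ a b / (φ b - φ a) ≤ 1 / (16 * lam)) :
    φ b - φ a ≤ 4 * lam * (φ d - φ c) := by
  have hlam0 : (0:ℝ) < lam := by linarith
  have ha : a ∈ Set.Icc a b := ⟨le_rfl, hab.le⟩
  have hb : b ∈ Set.Icc a b := ⟨hab.le, le_rfl⟩
  have hc : c ∈ Set.Icc a b := hsub ⟨le_rfl, hcd.le⟩
  have hd : d ∈ Set.Icc a b := hsub ⟨hcd.le, le_rfl⟩
  have hL : 0 < φ b - φ a := sub_pos.mpr (hφm ha hb hab)
  set L := φ b - φ a with hLdef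
  have hinf_le : infErr φ a b ≤ L / (16 * lam) := by
    have := (div_le_div_iff₀ hL (by positivity)).1 hβ
    rw [le_div_iff₀ (by positivity : (0:ℝ) < 16 * lam)]
    linarith
  have hinf_lt : infErr φ a b < L / (8 * lam) := by
    have : L / (16 * lam) < L / (8 * lam) := by
      apply div_lt_div_of_pos_left hL (by positivity)
      linarith
    linarith
  have hne : {E : ℝ | ∃ γ δ : ℝ, E = supErr φ a b γ δ}.Nonempty :=
    ⟨supErr φ a b 0 0, ⟨0, 0, rfl⟩⟩
  obtain ⟨S, ⟨γ, δ, rfl⟩, hSlt⟩ := exists_lt_of_csInf_lt hne hinf_lt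
  set S := supErr φ a b γ δ with hSdef
  have hS0 : 0 ≤ S := le_trans (abs_nonneg _) (supErr_spec φ a b γ δ hφc ha)
  have ea := abs_le.1 (supErr_spec φ a b γ δ hφc ha)
  have eb := abs_le.1 (supErr_spec φ a b γ δ hφc hb)
  have ec := abs_le.1 (supErr_spec φ a b γ δ hφc hc)
  have ed := abs_le.1 (supErr_spec φ a b γ δ hφc hd)
  have h8 : 8 * lam * S < L := by
    rw [lt_div_iff₀ (by positivity : (0:ℝ) < 8 * lam)] at hSlt
    nlinarith
  have hγ : 0 < γ := by nlinarith
  have hdc : (b - a) / lam ≤ d - c := by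
    rw [div_le_iff₀ hlam0]; nlinarith
  nlinarith [mul_le_mul_of_nonneg_left hlen hγ.le, mul_pos hγ (sub_pos.mpr hab),
    mul_nonneg hS0 (by linarith : (0:ℝ) ≤ lam - 1)]
end

section
/- Let φ be a continuous strictly increasing function on a compact interval I, and let a be its L∞ best affine estimator with error E := ‖φ − a‖_{L∞(I)}. Let m_I be the midpoint of I and m_{φ(I)} the midpoint of the image interval φ(I). Then |φ(m_I) − m_{φ(I)}| ≤ 2E; in particular qs_φ(I) := |φ(m_I) − m_{φ(I)}|/ℓ(φ(I)) ≤ 2β_φ(I). -/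
/-- Midpoint estimate: if `x ↦ γ x + δ` is the L∞ best affine estimator of a continuous
strictly increasing `φ` on `[a,b]` with error `E`, then the image of the midpoint of the
interval differs from the midpoint of the image interval by at most `2E`; in particular
`qs_φ(I) ≤ 2 β_φ(I)`. -/
theorem stmt6 (a b γ δ : ℝ) (hab : a < b) (φ : ℝ → ℝ)
    (hφc : ContinuousOn φ (Set.Icc a b))
    (hφm : StrictMonoOn φ (Set.Icc a b))
    (hbest : ∀ γ' δ' : ℝ, supErr φ a b γ δ ≤ supErr φ a b γ' δ') :
    |φ ((a + b) / 2) - (φ a + φ b) / 2| ≤ 2 * supErr φ a b γ δ ∧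
      |φ ((a + b) / 2) - (φ a + φ b) / 2| / (φ b - φ a) ≤
        2 * (supErr φ a b γ δ / (φ b - φ a)) := by
  set f : ℝ → ℝ := fun x => |φ x - (γ * x + δ)| with hf
  have hfc : ContinuousOn f (Set.Icc a b) := by
    apply ContinuousOn.abs
    exact hφc.sub (by fun_prop)
  have hbdd : BddAbove (f '' Set.Icc a b) :=
    (isCompact_Icc.image_of_continuousOn hfc).bddAbove
  have hle : ∀ x ∈ Set.Icc a b, f x ≤ supErr φ a b γ δ := fun x hx =>
    le_csSup hbdd ⟨x, hx, rfl⟩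
  have hma : a ∈ Set.Icc a b := ⟨le_refl a, hab.le⟩
  have hmb : b ∈ Set.Icc a b := ⟨hab.le, le_refl b⟩
  have hmm : (a + b) / 2 ∈ Set.Icc a b := ⟨by linarith, by linarith⟩
  have h1 := hle a hma
  have h2 := hle b hmb
  have h3 := hle ((a + b) / 2) hmm
  simp only [hf] at h1 h2 h3
  have key : |φ ((a + b) / 2) - (φ a + φ b) / 2| ≤ 2 * supErr φ a b γ δ := by
    have := abs_sub_abs_le_abs_sub (φ ((a + b) / 2)) (φ a)
    rw [abs_le] at h1 h2 h3 ⊢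
    constructor <;> nlinarith [h1.1, h1.2, h2.1, h2.2, h3.1, h3.2]
  refine ⟨key, ?_⟩
  have hpos : 0 < φ b - φ a := sub_pos.mpr (hφm hma hmb hab)
  rw [mul_div_assoc'] at *
  exact div_le_div_of_nonneg_right key hpos.le |>.trans_eq rfl
end

section
/- Let 0 < η ≤ 1 and let γ_0, …, γ_m > 0 and β_1, …, β_m ≥ 0 satisfy, for each 0 ≤ i < m, 1 − 32β_{i+1} ≤ γ_{i+1}/γ_i ≤ 1 + 32β_{i+1}, with β_i ≤ (2^η − 1)/32 for all i. Then for every k ≤ m, |γ_k − γ_0| ≤ 32·γ_0·2^{η(k−1)}·∑_{i=0}^{k} β_i. -/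
/-- Lemma 4.5.1 (the first discrete integral): a discrete Gronwall-type estimate.
If each ratio `γ (i+1) / γ i` lies within `[1 - 32 β (i+1), 1 + 32 β (i+1)]` and each
`β i ≤ (2^η - 1)/32`, then `|γ k - γ 0| ≤ 32 γ 0 · 2^{η(k-1)} · ∑_{i=0}^{k} β i`. -/
theorem stmt7 (η : ℝ) (hη0 : 0 < η) (hη1 : η ≤ 1) (m : ℕ) (γ β : ℕ → ℝ)
    (hγ : ∀ i, 0 < γ i) (hβ0 : ∀ i, 0 ≤ β i)
    (hβ : ∀ i ≤ m, β i ≤ ((2 : ℝ) ^ η - 1) / 32)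
    (hratio : ∀ i < m,
      1 - 32 * β (i + 1) ≤ γ (i + 1) / γ i ∧ γ (i + 1) / γ i ≤ 1 + 32 * β (i + 1)) :
    ∀ k ≤ m,
      |γ k - γ 0| ≤
        32 * γ 0 * (2 : ℝ) ^ (η * ((k : ℝ) - 1)) * ∑ i ∈ Finset.range (k + 1), β i := by
  have h2 : (0:ℝ) < 2 := by norm_num
  -- growth bound
  have grow : ∀ k ≤ m, γ k ≤ γ 0 * (2 : ℝ) ^ (η * (k : ℝ)) := by
    intro k
    induction k with
    | zero => intro _; simp
    | succ k ih =>
      intro hk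
      have hkm : k < m := hk
      have ih' := ih (le_of_lt hkm)
      have hr := (hratio k hkm).2
      have hub : γ (k+1) ≤ (1 + 32 * β (k+1)) * γ k :=
        (div_le_iff₀ (hγ k)).mp hr
      have hβk : 1 + 32 * β (k+1) ≤ (2:ℝ) ^ η := by
        have := hβ (k+1) hk
        linarith
      have hpow : (0:ℝ) < (2:ℝ) ^ (η * (k:ℝ)) := Real.rpow_pos_of_pos h2 _
      calc γ (k+1) ≤ (1 + 32 * β (k+1)) * γ k := hub
        _ ≤ (2:ℝ)^η * (γ 0 * (2:ℝ)^(η*(k:ℝ))) := by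
            have h1 : (0:ℝ) ≤ 1 + 32 * β (k+1) := by
              have := hβ0 (k+1); linarith
            have := mul_le_mul hβk ih' (le_of_lt (hγ k))
              (Real.rpow_nonneg (le_of_lt h2) η)
            exact le_trans (mul_le_mul_of_nonneg_right hβk (le_of_lt (hγ k)))
              (by nlinarith [Real.rpow_pos_of_pos h2 η])
        _ = γ 0 * (2:ℝ)^(η*((k:ℝ)+1)) := by
            rw [mul_add, mul_one, Real.rpow_add h2]; ring
        _ = γ 0 * (2:ℝ)^(η*(((k:ℕ):ℝ)+1)) := by norm_num
        _ = γ 0 * (2:ℝ)^(η*(((k+1:ℕ)):ℝ)) := by push_cast; ring_nf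
  intro k
  induction k with
  | zero =>
    intro _
    simp only [Nat.cast_zero, sub_self, abs_zero, Finset.range_one, Finset.sum_singleton]
    have hγ0 := hγ 0
    have hpw : (0:ℝ) ≤ (2:ℝ) ^ (η * ((0:ℝ) - 1)) := Real.rpow_nonneg (by norm_num) _
    exact mul_nonneg (mul_nonneg (by nlinarith) hpw)
      (Finset.sum_nonneg fun i _ => hβ0 i)
  | succ k ih =>
    intro hk
    have hkm : k < m := hk
    have ih' := ih (le_of_lt hkm)
    obtain ⟨hl, hr⟩ := hratio k hkm
    have hγk := hγ k
    have hub : γ (k+1) ≤ (1 + 32 * β (k+1)) * γ k := (div_le_iff₀ hγk).mp hr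
    have hlb : (1 - 32 * β (k+1)) * γ k ≤ γ (k+1) := (le_div_iff₀ hγk).mp hl
    have hstep : |γ (k+1) - γ k| ≤ 32 * β (k+1) * γ k := by
      rw [abs_le]; constructor <;> nlinarith
    have hgk : γ k ≤ γ 0 * (2:ℝ)^(η*(k:ℝ)) := grow k (le_of_lt hkm)
    have hmono : (2:ℝ)^(η*((k:ℝ)-1)) ≤ (2:ℝ)^(η*(k:ℝ)) := by
      apply Real.rpow_le_rpow_of_exponent_le (by norm_num)
      nlinarith
    have hSnn : (0:ℝ) ≤ ∑ i ∈ Finset.range (k+1), β i :=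
      Finset.sum_nonneg fun i _ => hβ0 i
    have hsum : ∑ i ∈ Finset.range (k+1+1), β i
        = (∑ i ∈ Finset.range (k+1), β i) + β (k+1) := Finset.sum_range_succ β (k+1)
    have hexp : η * (((k+1:ℕ):ℝ) - 1) = η * (k:ℝ) := by push_cast; ring
    rw [hexp, hsum]
    have hpow : (0:ℝ) < (2:ℝ)^(η*(k:ℝ)) := Real.rpow_pos_of_pos h2 _
    have h1 : |γ (k+1) - γ 0| ≤ |γ (k+1) - γ k| + |γ k - γ 0| := abs_sub_le _ _ _
    have h2' : 32 * β (k+1) * γ k ≤ 32 * γ 0 * (2:ℝ)^(η*(k:ℝ)) * β (k+1) := by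
      nlinarith [hβ0 (k+1)]
    have h3 : |γ k - γ 0| ≤ 32 * γ 0 * (2:ℝ)^(η*(k:ℝ)) * ∑ i ∈ Finset.range (k+1), β i := by
      refine le_trans ih' ?_
      exact mul_le_mul_of_nonneg_right
        (mul_le_mul_of_nonneg_left hmono (by nlinarith [hγ 0])) hSnn
    calc |γ (k+1) - γ 0| ≤ |γ (k+1) - γ k| + |γ k - γ 0| := h1
      _ ≤ 32 * β (k+1) * γ k + 32 * γ 0 * (2:ℝ)^(η*(k:ℝ)) * ∑ i ∈ Finset.range (k+1), β i := by
          linarith [le_trans hstep (le_refl _)]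
      _ ≤ 32 * γ 0 * (2:ℝ)^(η*(k:ℝ)) * ((∑ i ∈ Finset.range (k+1), β i) + β (k+1)) := by
          nlinarith
end

section
/- Let A, B > 0 with A, B sufficiently small, and let q(x) := (A/B)x + (A/(16B²))x². Define q̃ := tan ∘ q ∘ arctan. Then there exists δ > 0 such that whenever 0 < A, B < δ, for all t ∈ [−4B, 2B] one has q̃(t) ≤ (A/B)t + (A/(8B²))t². -/
/-!
Since `arctan t = t (1 + O(t²))` and `tan x = x (1 + O(x²))`, `q̃` differs from `q` by a cubic error.
For `t ≥ 0` the error of `tan` is at most `q(t)³`, which the extra `(A/(16B²)) t²` absorbs once `A` is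
small. For `t ≤ 0` the argument `q(arctan t)` is nonpositive, where `tan x ≤ x`, and the error of
`arctan`, of size `(A/B) |t|³`, is absorbed once `B` is small.
-/

open Real

namespace Real

lemma tan_le_self_of_nonpos {x : ℝ} (hx : -(π / 2) < x) (hx₀ : x ≤ 0) : tan x ≤ x := by
  have := le_tan (neg_nonneg.2 hx₀) (by linarith)
  rw [tan_neg] at this
  linarith

lemma tan_le_add_pow_three {x : ℝ} (hx₀ : 0 ≤ x) (hx₁ : x ≤ 1) : tan x ≤ x + x ^ 3 := by
  have hcos : 1 - x ^ 2 / 2 ≤ cos x := one_sub_sq_div_two_le_cos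
  rw [tan_eq_sin_div_cos, div_le_iff₀ (by nlinarith)]
  calc sin x ≤ x := sin_le hx₀
    _ ≤ (x + x ^ 3) * (1 - x ^ 2 / 2) := by
        nlinarith [mul_nonneg (pow_nonneg hx₀ 3) (show 0 ≤ 1 - x ^ 2 by nlinarith)]
    _ ≤ (x + x ^ 3) * cos x := by gcongr

lemma arctan_le_self {t : ℝ} (ht : 0 ≤ t) : arctan t ≤ t := by
  simpa only [tan_arctan] using le_tan (arctan_nonneg.2 ht) (arctan_lt_pi_div_two t)

lemma self_le_arctan_of_nonpos {t : ℝ} (ht : t ≤ 0) : t ≤ arctan t := by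
  have := arctan_le_self (neg_nonneg.2 ht)
  rw [arctan_neg] at this
  linarith

lemma sub_pow_three_le_arctan {r : ℝ} (hr₀ : 0 ≤ r) (hr₁ : r ≤ 1) : r - r ^ 3 ≤ arctan r := by
  have hs₀ : 0 ≤ r - r ^ 3 := by nlinarith [mul_nonneg hr₀ hr₀]
  have hsr : r - r ^ 3 ≤ r := by nlinarith [pow_nonneg hr₀ 3]
  have htan : tan (r - r ^ 3) ≤ r := by
    have := tan_le_add_pow_three hs₀ (hsr.trans hr₁)
    nlinarith [pow_le_pow_left₀ hs₀ hsr 3]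
  calc r - r ^ 3 = arctan (tan (r - r ^ 3)) :=
        (arctan_tan (by linarith [pi_pos]) (by linarith [pi_gt_three])).symm
    _ ≤ arctan r := arctan_strictMono.monotone htan

lemma arctan_le_sub_pow_three_of_nonpos {t : ℝ} (ht₁ : -1 ≤ t) (ht₀ : t ≤ 0) :
    arctan t ≤ t - t ^ 3 := by
  have := sub_pow_three_le_arctan (neg_nonneg.2 ht₀) (by linarith)
  rw [arctan_neg] at this
  linarith

end Real

lemma tan_quadratic_arctan_le_of_nonneg {a c t : ℝ} (ha : 0 ≤ a) (hc : 0 ≤ c) (ht : 0 ≤ t)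
    (hq₁ : a * t + c * t ^ 2 ≤ 1) (hq₃ : (a * t + c * t ^ 2) ^ 3 ≤ c * t ^ 2) :
    tan (a * arctan t + c * arctan t ^ 2) ≤ a * t + 2 * c * t ^ 2 := by
  have hu₀ : 0 ≤ arctan t := arctan_nonneg.2 ht
  have hut : arctan t ≤ t := arctan_le_self ht
  have hq₀ : 0 ≤ a * arctan t + c * arctan t ^ 2 := by positivity
  have hq : a * arctan t + c * arctan t ^ 2 ≤ a * t + c * t ^ 2 := by gcongr
  have hπ : 1 < π / 2 := by linarith [pi_gt_three]
  calc tan (a * arctan t + c * arctan t ^ 2) ≤ tan (a * t + c * t ^ 2) :=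
        strictMonoOn_tan.monotoneOn ⟨by linarith, by linarith⟩ ⟨by linarith, by linarith⟩ hq
    _ ≤ (a * t + c * t ^ 2) + (a * t + c * t ^ 2) ^ 3 :=
        tan_le_add_pow_three (hq₀.trans hq) hq₁
    _ ≤ a * t + 2 * c * t ^ 2 := by linarith

lemma tan_quadratic_arctan_le_of_nonpos {a c t : ℝ} (hc : 0 ≤ c) (ht₁ : -1 ≤ t) (ht₀ : t ≤ 0)
    (hat : -(π / 2) < a * t) (hact : 0 ≤ a + c * t) (hcub : -(a * t) ≤ c) :
    tan (a * arctan t + c * arctan t ^ 2) ≤ a * t + 2 * c * t ^ 2 := by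
  have hu₀ : arctan t ≤ 0 := arctan_le_zero.2 ht₀
  have htu : t ≤ arctan t := self_le_arctan_of_nonpos ht₀
  have ha : 0 ≤ a := by nlinarith
  have hq₀ : a * arctan t + c * arctan t ^ 2 ≤ 0 := by
    have : 0 ≤ a + c * arctan t := by nlinarith
    nlinarith
  have hq : -(π / 2) < a * arctan t + c * arctan t ^ 2 := by
    nlinarith [mul_le_mul_of_nonneg_left htu ha, sq_nonneg (arctan t)]
  calc tan (a * arctan t + c * arctan t ^ 2) ≤ a * arctan t + c * arctan t ^ 2 :=
        tan_le_self_of_nonpos hq hq₀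
    _ ≤ a * (t - t ^ 3) + c * t ^ 2 := by
        have hsq : arctan t ^ 2 ≤ t ^ 2 := by nlinarith
        have := arctan_le_sub_pow_three_of_nonpos ht₁ ht₀
        gcongr
    _ ≤ a * t + 2 * c * t ^ 2 := by nlinarith [mul_le_mul_of_nonneg_left hcub (sq_nonneg t)]

lemma cube_add_sq_div_sixteen_le {A s : ℝ} (hA₀ : 0 ≤ A) (hA : A ≤ 1 / 10) (hs₀ : 0 ≤ s)
    (hs₂ : s ≤ 2) : (A * s + A / 16 * s ^ 2) ^ 3 ≤ A / 16 * s ^ 2 := by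
  have hq : A * s + A / 16 * s ^ 2 ≤ 9 / 8 * (A * s) := by
    nlinarith [mul_nonneg (mul_nonneg hA₀ hs₀) (show 0 ≤ 2 - s by linarith)]
  have hA2s : A ^ 2 * s ≤ 1 / 50 := by nlinarith
  calc (A * s + A / 16 * s ^ 2) ^ 3 ≤ (9 / 8 * (A * s)) ^ 3 := by gcongr
    _ = 729 / 512 * (A ^ 2 * s) * (A * s ^ 2) := by ring
    _ ≤ A / 16 * s ^ 2 := by nlinarith [mul_nonneg hA₀ (sq_nonneg s)]

/-- There exists `δ > 0` such that whenever `0 < A, B < δ`, the image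
`q̃ = tan ∘ q ∘ arctan` of the quadratic `q(x) = (A/B) x + (A/(16B²)) x²` under the
rotated Penrose chart satisfies `q̃(t) ≤ (A/B) t + (A/(8B²)) t²` for all `t ∈ [-4B, 2B]`. -/
theorem stmt16 :
    ∃ δ : ℝ, 0 < δ ∧
      ∀ A B : ℝ, 0 < A → A < δ → 0 < B → B < δ →
        ∀ t ∈ Set.Icc (-4 * B) (2 * B),
          Real.tan ((A / B) * Real.arctan t + (A / (16 * B ^ 2)) * (Real.arctan t) ^ 2) ≤
            (A / B) * t + (A / (8 * B ^ 2)) * t ^ 2 := by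
  refine ⟨1 / 10, by norm_num, fun A B hA hAδ hB hBδ t ⟨ht₁, ht₂⟩ => ?_⟩
  obtain ⟨s, rfl⟩ : ∃ s, t = B * s := ⟨t / B, by field_simp⟩
  have hs₁ : -4 ≤ s := le_of_mul_le_mul_left (by linarith) hB
  have hs₂ : s ≤ 2 := le_of_mul_le_mul_left (by linarith) hB
  have hlin : A / B * (B * s) = A * s := by field_simp
  have hquad : A / (16 * B ^ 2) * (B * s) ^ 2 = A / 16 * s ^ 2 := by field_simp
  rw [show A / (8 * B ^ 2) = 2 * (A / (16 * B ^ 2)) by ring]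
  rcases le_total 0 s with hs | hs
  · apply tan_quadratic_arctan_le_of_nonneg (by positivity) (by positivity) (by positivity)
    · rw [hlin, hquad]; nlinarith
    · rw [hlin, hquad]; exact cube_add_sq_div_sixteen_le hA.le hAδ.le hs hs₂
  · apply tan_quadratic_arctan_le_of_nonpos (by positivity) (by nlinarith) (by nlinarith)
    · rw [hlin]; nlinarith [pi_gt_three]
    · have : A / (16 * B ^ 2) * (B * s) = A / B * (s / 16) := by field_simp
      rw [this]
      nlinarith [div_pos hA hB]
    · rw [hlin, le_div_iff₀ (by positivity)]
      nlinarith [mul_nonneg (mul_nonneg hA.le (show 0 ≤ 4 + s by linarith)) (sq_nonneg B),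
        mul_nonneg hA.le (show 0 ≤ 1 - 64 * B ^ 2 by nlinarith)]
end
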